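/- With the encoding of Boolean matrices A (a×b, row-major, 1 ↦ '1', 0 ↦ ◊) and B (b×c, column-major, 1 ↦ '0', 0 ↦ '1') into strings S_A and S_B: for all i ∈ [0..a), j ∈ [0..c), and x ∈ [1..min(a−i, c−j)], it holds that LCEW_{S_A,S_B}(bi+1, bj+1) ≥ bx if and only if (AB)[i+y, j+y] = 0 for all y ∈ [1..x]. -/

import Mathlib

variable {α : Type*}

/-- Wildcard match relation on characters: `a ∼ b ↔ a = b ∨ a = d ∨ b = d`,
where `d` is the wildcard. -/
def mtch (d a b : α) : Prop := a = b ∨ a = d ∨ b = d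

instance [DecidableEq α] (d a b : α) : Decidable (mtch d a b) :=
  inferInstanceAs (Decidable (a = b ∨ a = d ∨ b = d))

/-- Positionwise match of equal-length strings (lists). -/
def smatch (d : α) (X Y : List α) : Prop :=
  X.length = Y.length ∧ ∀ i < X.length, mtch d (X.getD i d) (Y.getD i d)

/-- Longest common extension with wildcards in a single string `T`,
0-based positions. -/
def lcew [DecidableEq α] (d : α) (T : List α) (i j : ℕ) : ℕ :=
  Nat.findGreatest
    (fun ℓ => ℓ ≤ min (T.length - i) (T.length - j) ∧
      ∀ p < ℓ, mtch d (T.getD (i + p) d) (T.getD (j + p) d)) T.length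

/-- Longest common extension with wildcards between two strings `P` and `Q`,
0-based positions. -/
def lcew2 [DecidableEq α] (d : α) (P Q : List α) (i j : ℕ) : ℕ :=
  Nat.findGreatest
    (fun ℓ => ℓ ≤ min (P.length - i) (Q.length - j) ∧
      ∀ p < ℓ, mtch d (P.getD (i + p) d) (Q.getD (j + p) d))
    (P.length + Q.length)

/-!
The window of length `b * x` starting at `b * i` in `S_A` and at `b * j` in `S_B` splits into `x`
blocks of length `b`, the `y`-th of which lines row `i + y` of `A` up against column `j + y` of `B`.
Since `◊` matches everything, the only mismatch is `'1'` against `'0'`, i.e. a position `k` with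
`A[i + y, k] = B[k, j + y] = 1`; so the window matches iff each of these Boolean dot products is `0`.
-/

theorem le_findGreatest_iff_of_antitone {Φ : ℕ → Prop} [DecidablePred Φ] {n N : ℕ}
    (h0 : Φ 0) (hΦ : Antitone Φ) (hN : ∀ k, Φ k → k ≤ N) :
    n ≤ Nat.findGreatest Φ N ↔ Φ n :=
  ⟨fun hn => hΦ hn (Nat.findGreatest_spec (Nat.zero_le N) h0),
    fun hn => Nat.le_findGreatest (hN n hn) hn⟩

theorem le_lcew2_iff [DecidableEq α] (d : α) (P Q : List α) (i j n : ℕ) :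
    n ≤ lcew2 d P Q i j ↔ n ≤ min (P.length - i) (Q.length - j) ∧
      ∀ p < n, mtch d (P.getD (i + p) d) (Q.getD (j + p) d) := by
  refine le_findGreatest_iff_of_antitone ⟨Nat.zero_le _, fun p hp => absurd hp p.not_lt_zero⟩
    ?_ fun k hk => by omega
  intro m k hmk ⟨hlen, hmatch⟩
  exact ⟨hmk.trans hlen, fun p hp => hmatch p (hp.trans_le hmk)⟩

theorem forall_lt_mul_iff {b x : ℕ} {f : ℕ → Prop} :
    (∀ p < b * x, f p) ↔ ∀ y < x, ∀ k < b, f (b * y + k) := by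
  constructor
  · intro h y hy k hk
    exact h _ (by nlinarith)
  · intro h p hp
    have hb : 0 < b := Nat.pos_of_mul_pos_right (Nat.zero_lt_of_lt hp)
    rw [← Nat.div_add_mod p b]
    exact h _ (by rwa [Nat.div_lt_iff_lt_mul hb, mul_comm]) _ (Nat.mod_lt p hb)

theorem mul_add_lt_mul {a b r k : ℕ} (hk : k < b) (hr : r < a) : b * r + k < b * a := by
  nlinarith [Nat.mul_le_mul_left b hr]

theorem mul_add_div_of_lt {b r k : ℕ} (hk : k < b) : (b * r + k) / b = r := by
  rw [Nat.mul_add_div (Nat.zero_lt_of_lt hk), Nat.div_eq_of_lt hk, add_zero]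

theorem mul_add_mod_of_lt {b r k : ℕ} (hk : k < b) : (b * r + k) % b = k := by
  rw [Nat.mul_add_mod, Nat.mod_eq_of_lt hk]

theorem getD_map_range {β : Type*} (f : ℕ → β) {n idx : ℕ} (h : idx < n) (d : β) :
    ((List.range n).map f).getD idx d = f idx := by
  simp [h]

-- `'0'`, `'1'` are coded as `0`, `1` and the wildcard `◊` as `2`.
def rowMajorCode (A : ℕ → ℕ → Bool) (a b : ℕ) : List ℕ :=
  (List.range (a * b)).map fun idx => if A (idx / b) (idx % b) then 1 else 2

def colMajorCode (B : ℕ → ℕ → Bool) (b c : ℕ) : List ℕ :=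
  (List.range (b * c)).map fun idx => if B (idx % b) (idx / b) then 0 else 1

section Codes

variable (A B : ℕ → ℕ → Bool) {a b c : ℕ}

@[simp]
theorem length_rowMajorCode : (rowMajorCode A a b).length = a * b := by
  simp [rowMajorCode]

@[simp]
theorem length_colMajorCode : (colMajorCode B b c).length = b * c := by
  simp [colMajorCode]

theorem rowMajorCode_getD {r k : ℕ} (hr : r < a) (hk : k < b) :
    (rowMajorCode A a b).getD (b * r + k) 2 = if A r k then 1 else 2 := by
  rw [rowMajorCode, getD_map_range _ (mul_comm a b ▸ mul_add_lt_mul hk hr),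
    mul_add_div_of_lt hk, mul_add_mod_of_lt hk]

theorem colMajorCode_getD {s k : ℕ} (hs : s < c) (hk : k < b) :
    (colMajorCode B b c).getD (b * s + k) 2 = if B k s then 0 else 1 := by
  rw [colMajorCode, getD_map_range _ (mul_add_lt_mul hk hs),
    mul_add_div_of_lt hk, mul_add_mod_of_lt hk]

theorem mtch_code_iff (u v : Bool) :
    mtch 2 (if u then 1 else 2) (if v then 0 else 1) ↔ ¬(u = true ∧ v = true) := by
  cases u <;> cases v <;> simp [mtch]

theorem le_lcew2_code_iff {i j x : ℕ} (ha : x ≤ a - i) (hc : x ≤ c - j) :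
    b * x ≤ lcew2 2 (rowMajorCode A a b) (colMajorCode B b c) (b * i) (b * j) ↔
      ∀ y < x, ∀ k < b, ¬(A (i + y) k = true ∧ B k (j + y) = true) := by
  have hfits : b * x ≤ min (a * b - b * i) (b * c - b * j) := by
    rw [le_min_iff, mul_comm a b, ← Nat.mul_sub_left_distrib, ← Nat.mul_sub_left_distrib]
    exact ⟨Nat.mul_le_mul_left b ha, Nat.mul_le_mul_left b hc⟩
  rw [le_lcew2_iff, length_rowMajorCode, length_colMajorCode, and_iff_right hfits,
    forall_lt_mul_iff]
  refine forall₂_congr fun y hy => forall₂_congr fun k hk => ?_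
  rw [← add_assoc, ← mul_add, ← add_assoc, ← mul_add,
    rowMajorCode_getD A (by omega) hk, colMajorCode_getD B (by omega) hk, mtch_code_iff]

end Codes

theorem stmt13_general (A B : ℕ → ℕ → Bool) (a b c : ℕ) (SA SB : List ℕ)
    (hSA : SA = (List.range (a * b)).map
      (fun idx => if A (idx / b) (idx % b) then 1 else 2))
    (hSB : SB = (List.range (b * c)).map
      (fun idx => if B (idx % b) (idx / b) then 0 else 1))
    (i j x : ℕ) (hx : x ≤ min (a - i) (c - j)) :
    (b * x ≤ lcew2 2 SA SB (b * i) (b * j) ↔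
      ∀ y, 1 ≤ y → y ≤ x →
        ¬ ∃ k < b, A (i + y - 1) k = true ∧ B k (j + y - 1) = true) := by
  rw [show SA = rowMajorCode A a b from hSA, show SB = colMajorCode B b c from hSB,
    le_lcew2_code_iff A B (le_min_iff.1 hx).1 (le_min_iff.1 hx).2]
  constructor
  · rintro h y hy1 hyx ⟨k, hk, hAB⟩
    obtain ⟨y, rfl⟩ := Nat.exists_eq_add_of_le' hy1
    exact h y (by omega) k hk (by simpa only [← add_assoc, Nat.add_sub_cancel] using hAB)
  · intro h y hy k hk hAB
    exact h (y + 1) (by omega) hy ⟨k, hk, by simpa only [← add_assoc, Nat.add_sub_cancel]⟩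

theorem stmt13 (A B : ℕ → ℕ → Bool) (a b c : ℕ) (SA SB : List ℕ)
    (hSA : SA = (List.range (a * b)).map
      (fun idx => if A (idx / b) (idx % b) then 1 else 2))
    (hSB : SB = (List.range (b * c)).map
      (fun idx => if B (idx % b) (idx / b) then 0 else 1))
    (i j x : ℕ) (hi : i < a) (hj : j < c)
    (hx1 : 1 ≤ x) (hx : x ≤ min (a - i) (c - j)) :
    (b * x ≤ lcew2 2 SA SB (b * i) (b * j) ↔
      ∀ y, 1 ≤ y → y ≤ x →
        ¬ ∃ k < b, A (i + y - 1) k = true ∧ B k (j + y - 1) = true) :=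
  stmt13_general A B a b c SA SB hSA hSB i j x hx
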